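/- Suppose m = 1. Let α ∈ 𝒜 be a probability vector whose support S = {j : α_j > 0} is nonempty, let i ∈ {1,…,L} with i ∉ S, and assume ∫_{ℝ^L} p_ℓ(x) |log(p̄_α(x)/g(x))| dx < ∞ for all ℓ and ∫_{ℝ^L} g(x) |log(p̄_α(x)/g(x))| dx < ∞. Then ∫_{ℝ^L} p_i(x) log(p̄_α(x)/g(x)) dx = ∫_{ℝ^L} g(x) log(p̄_α(x)/g(x)) dx < 0. -/

import Mathlib

/-!
Since `α i = 0`, the likelihood ratio `p̄_α / g = ∑ α_ℓ f_ℓ(x_ℓ) / g_ℓ(x_ℓ)` does not depend on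
`x_i`, so integrating out `x_i` against `f_i` or against `g_i` gives the same value. That value is
`-∫ g (r - 1 - log r)` with `r = p̄_α / g`, which is negative because `log r < r - 1` for `r ≠ 1`,
unless `p̄_α = g` a.e. By Fubini the latter would make `α_j f_j / g_j` a.e. constant for `j` in the
support, and since `f_j` and `g_j` both integrate to `1` this forces `f_j = g_j` a.e.
-/

open MeasureTheory ProbabilityTheory Filter Finset
open scoped ENNReal NNReal Classical

namespace MovingAnomaly

/-- The observation space of the sensor network: one real observation per sensor. -/
abbrev Obs (L : ℕ) := Fin L → ℝ

/-- The sample space: an infinite sequence of vector observations.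
Coordinate `n : ℕ` carries the observation `X[n+1]` at time `n+1`. -/
abbrev Traj (L : ℕ) := ℕ → Obs L

/-- The collection ℰ of all size-`m` subsets of the `L` sensors. -/
abbrev ESet (L m : ℕ) := {E : Finset (Fin L) // E.card = m}

/-- Membership in the probability simplex 𝒜 over ℰ. -/
def MemSimplex (L m : ℕ) (α : ESet L m → ℝ) : Prop :=
  (∀ E, 0 ≤ α E) ∧ ∑ E : ESet L m, α E = 1

/-- `d` is a strictly positive probability density on ℝ (w.r.t. Lebesgue measure). -/
structure IsPosDensity (d : ℝ → ℝ) : Prop where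
  meas : Measurable d
  pos : ∀ t, 0 < d t
  int_one : ∫ t, d t = 1

/-- Joint non-anomalous density `g(x) = ∏ g_ℓ(x_ℓ)`. -/
def gdens {L : ℕ} (g : Fin L → ℝ → ℝ) (x : Obs L) : ℝ := ∏ ℓ, g ℓ (x ℓ)

/-- Joint density `p_E(x)` when the anomalous sensors are those of `E`. -/
def pdens {L : ℕ} (f g : Fin L → ℝ → ℝ) (E : Finset (Fin L)) (x : Obs L) : ℝ :=
  ∏ ℓ, if ℓ ∈ E then f ℓ (x ℓ) else g ℓ (x ℓ)

/-- The mixture density `p̄_α(x) = ∑_E α_E p_E(x)`. -/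
def pbar {L m : ℕ} (f g : Fin L → ℝ → ℝ) (α : ESet L m → ℝ) (x : Obs L) : ℝ :=
  ∑ E : ESet L m, α E * pdens f g E.1 x

/-- The measure on ℝ with density `d` w.r.t. Lebesgue measure. -/
noncomputable def densMeasure (d : ℝ → ℝ) : Measure ℝ :=
  volume.withDensity fun t => ENNReal.ofReal (d t)

/-- The product measure on `ℝ^L` whose `ℓ`-th marginal has density `d ℓ`. -/
noncomputable def jointMeasure {L : ℕ} (d : Fin L → ℝ → ℝ) : Measure (Obs L) :=
  Measure.pi fun ℓ => densMeasure (d ℓ)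

/-- The measure with joint density `p_E`. -/
noncomputable def pMeasure {L : ℕ} (f g : Fin L → ℝ → ℝ) (E : Finset (Fin L)) :
    Measure (Obs L) :=
  jointMeasure fun ℓ => if ℓ ∈ E then f ℓ else g ℓ

/-- The mixture measure with density `p̄_α`. -/
noncomputable def mixMeasure {L m : ℕ} (f g : Fin L → ℝ → ℝ) (α : ESet L m → ℝ) :
    Measure (Obs L) :=
  ∑ E : ESet L m, ENNReal.ofReal (α E) • pMeasure f g E.1

/-- `P` is the infinite product measure on the sequence space under which the coordinates
are independent and coordinate `n` has law `μ n`. -/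
def IsProductLaw {L : ℕ} (P : Measure (Traj L)) (μ : ℕ → Measure (Obs L)) : Prop :=
  IsProbabilityMeasure P ∧
    iIndepFun (fun n (ω : Traj L) => ω n) P ∧
    ∀ n, P.map (fun ω => ω n) = μ n

/-- The natural filtration: `Fil L k = σ(X[1],…,X[k])`. -/
def Fil (L : ℕ) (k : ℕ) : MeasurableSpace (Traj L) :=
  MeasurableSpace.comap (fun (ω : Traj L) (i : Fin k) => ω i) inferInstance

/-- A stopping time of the natural filtration (valued in ℕ ∪ {∞}, time 0 excluded
by requiring values ≥ 1 where needed). -/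
def IsStopping {L : ℕ} (τ : Traj L → ℕ∞) : Prop :=
  ∀ k : ℕ, MeasurableSet[Fil L k] {ω | τ ω ≤ (k : ℕ∞)}

/-- The quantity `esssup_{τ>ν} E_P[τ - ν | F_ν]`, with the convention that it equals `1`
when `P(τ > ν) = 0`. -/
noncomputable def condDelay {L : ℕ} (P : Measure (Traj L)) (ν : ℕ) (τ : Traj L → ℕ∞) :
    ℝ≥0∞ :=
  if hP : IsFiniteMeasure P then
    haveI := hP
    if P {ω | (ν : ℕ∞) < τ ω} = 0 then 1
    else
      essSup
        (fun ω => ∫⁻ ω', ((τ ω' - (ν : ℕ∞) : ℕ∞) : ℝ≥0∞) ∂(condExpKernel P (Fil L ν) ω))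
        (P.restrict {ω | (ν : ℕ∞) < τ ω})
  else 1

/-- Lorden-type worst-path delay `WADD(τ)`, given the family of measures `PS S ν = P_ν^S`. -/
noncomputable def wadd {L m : ℕ} (PS : (ℕ → ESet L m) → ℕ → Measure (Traj L))
    (τ : Traj L → ℕ∞) : ℝ≥0∞ :=
  ⨆ (S : ℕ → ESet L m) (ν : ℕ), condDelay (PS S ν) ν τ

/-- The delay `\overline{WADD}_α(τ)` for the randomized-anomaly model, given the family
`Pb ν = P̄_ν^α`. -/
noncomputable def waddBar {L : ℕ} (Pb : ℕ → Measure (Traj L)) (τ : Traj L → ℕ∞) : ℝ≥0∞ :=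
  ⨆ ν : ℕ, condDelay (Pb ν) ν τ

/-- Mean time to false alarm `E_∞[τ]` (as an extended nonnegative real). -/
noncomputable def mtfa {L : ℕ} (Pinf : Measure (Traj L)) (τ : Traj L → ℕ∞) : ℝ≥0∞ :=
  ∫⁻ ω, ((τ ω : ℕ∞) : ℝ≥0∞) ∂Pinf

/-- The class `C_γ` of stopping times with mean time to false alarm at least `γ`. -/
def Cgamma {L : ℕ} (Pinf : Measure (Traj L)) (γ : ℝ) (τ : Traj L → ℕ∞) : Prop :=
  IsStopping τ ∧ ENNReal.ofReal γ ≤ mtfa Pinf τ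

/-- The CUSUM statistic driven by the likelihood ratio `lr`:
`W[0] = 0`, `W[k] = max(W[k-1],1) * lr(X[k])`. -/
noncomputable def cusumStat {L : ℕ} (lr : Obs L → ℝ) (ω : Traj L) : ℕ → ℝ
  | 0 => 0
  | k + 1 => max (cusumStat lr ω k) 1 * lr (ω k)

/-- The instantaneous likelihood ratio `p̄_λ(x)/g(x)` of the M-CUSUM test. -/
noncomputable def mlr {L m : ℕ} (f g : Fin L → ℝ → ℝ) (lam : ESet L m → ℝ) (x : Obs L) : ℝ :=
  pbar f g lam x / gdens g x

/-- The M-CUSUM stopping time `τ_W(λ, b) = inf {k ≥ 1 : W_λ[k] ≥ e^b}` (∞ if no such k). -/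
noncomputable def mcusumTime {L m : ℕ} (f g : Fin L → ℝ → ℝ) (lam : ESet L m → ℝ) (b : ℝ)
    (ω : Traj L) : ℕ∞ :=
  sInf {t : ℕ∞ | ∃ k : ℕ, t = (k : ℕ∞) ∧ 1 ≤ k ∧ Real.exp b ≤ cusumStat (mlr f g lam) ω k}

/-- The Kullback–Leibler number `I_α = ∫ p̄_α log(p̄_α/g)`. -/
noncomputable def KLnum {L m : ℕ} (f g : Fin L → ℝ → ℝ) (α : ESet L m → ℝ) : ℝ :=
  ∫ x : Obs L, pbar f g α x * Real.log (pbar f g α x / gdens g x)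

/-- Joint density with the single anomaly at node `ℓ` (case `m = 1`):
`p_ℓ(x) = f_ℓ(x_ℓ) ∏_{r ≠ ℓ} g_r(x_r)`. -/
def pdens1 {L : ℕ} (f g : Fin L → ℝ → ℝ) (ℓ : Fin L) (x : Obs L) : ℝ :=
  ∏ r, if r = ℓ then f r (x r) else g r (x r)

/-- The mixture `p̄_α(x) = ∑_ℓ α_ℓ p_ℓ(x)` (case `m = 1`, `ℰ` identified with `{1,…,L}`). -/
def pbar1 {L : ℕ} (f g : Fin L → ℝ → ℝ) (α : Fin L → ℝ) (x : Obs L) : ℝ :=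
  ∑ ℓ, α ℓ * pdens1 f g ℓ x

theorem integral_mul_comp_removeNth {n : ℕ} (i : Fin (n + 1)) (d : ℝ → ℝ)
    (G : (Fin n → ℝ) → ℝ) :
    ∫ x : Fin (n + 1) → ℝ, d (x i) * G (i.removeNth x) = (∫ t, d t) * ∫ y, G y := by
  rw [← integral_prod_mul, ← Measure.volume_eq_prod,
    ← (volume_preserving_piFinSuccAbove (fun _ => ℝ) i).integral_comp']
  rfl

theorem exists_ae_eq_const_of_ae_prod_eq {α β γ : Type*} [MeasurableSpace α] [MeasurableSpace β]
    {μ : Measure α} {ν : Measure β} [SFinite ν] [NeZero μ] [NeZero ν] {φ : α → γ} {ψ : β → γ}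
    (h : ∀ᵐ p ∂μ.prod ν, φ p.1 = ψ p.2) : ∃ a, ∀ᵐ t ∂μ, φ t = a := by
  have h' := Measure.ae_ae_of_ae_prod h
  obtain ⟨t₀, ht₀⟩ := h'.exists
  refine ⟨φ t₀, ?_⟩
  filter_upwards [h'] with t ht
  obtain ⟨y, hy, hy₀⟩ := (ht.and ht₀).exists
  exact hy.trans hy₀.symm

theorem exists_ae_eq_const_of_ae_eq_comp_removeNth {n : ℕ} (j : Fin (n + 1)) {φ : ℝ → ℝ}
    {ψ : (Fin n → ℝ) → ℝ} (h : ∀ᵐ x : Fin (n + 1) → ℝ, φ (x j) = ψ (j.removeNth x)) :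
    ∃ a, ∀ᵐ t, φ t = a := by
  refine exists_ae_eq_const_of_ae_prod_eq (μ := (volume : Measure ℝ))
    (ν := (volume : Measure (Fin n → ℝ))) (ψ := ψ) ?_
  rw [← Measure.volume_eq_prod]
  have := (volume_preserving_piFinSuccAbove (fun _ => ℝ) j).symm.quasiMeasurePreserving.ae h
  simpa [Fin.insertNthEquiv] using this

theorem ae_eq_of_ae_eq_const_mul {Ω : Type*} [MeasurableSpace Ω] {μ : Measure Ω}
    {f g : Ω → ℝ} {a : ℝ} (hfg : ∫ t, f t ∂μ = ∫ t, g t ∂μ) (hg : ∫ t, g t ∂μ ≠ 0)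
    (h : ∀ᵐ t ∂μ, f t = a * g t) : ∀ᵐ t ∂μ, f t = g t := by
  have ha : a = 1 := by
    rw [integral_congr_ae h, integral_const_mul] at hfg
    exact (mul_eq_right₀ hg).1 hfg
  simpa [ha] using h

theorem integral_mul_log_div_lt_zero {Ω : Type*} [MeasurableSpace Ω] {μ : Measure Ω}
    {p q : Ω → ℝ} (hp : ∀ x, 0 < p x) (hq : ∀ x, 0 < q x) (hpi : Integrable p μ)
    (hqi : Integrable q μ) (hpq : ∫ x, p x ∂μ = ∫ x, q x ∂μ)
    (hlog : Integrable (fun x => q x * Real.log (p x / q x)) μ)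
    (hne : 0 < μ {x | p x ≠ q x}) :
    ∫ x, q x * Real.log (p x / q x) ∂μ < 0 := by
  set D : Ω → ℝ := fun x => p x - q x - q x * Real.log (p x / q x)
  have hD : ∀ x, D x = q x * (p x / q x - 1 - Real.log (p x / q x)) := fun x => by
    simp only [D, mul_sub, mul_div_cancel₀ _ (hq x).ne']
    ring
  have hD0 : 0 ≤ D := fun x => by
    rw [hD]
    exact mul_nonneg (hq x).le
      (by linarith [Real.log_le_sub_one_of_pos (div_pos (hp x) (hq x))])
  have hsupp : {x | p x ≠ q x} ⊆ Function.support D := fun x hx => by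
    have hr : p x / q x ≠ 1 := fun h => hx ((div_eq_one_iff_eq (hq x).ne').1 h)
    have := Real.log_lt_sub_one_of_pos (div_pos (hp x) (hq x)) hr
    exact (hD x).trans_ne (mul_pos (hq x) (by linarith)).ne'
  have hpos : 0 < ∫ x, D x ∂μ :=
    (integral_pos_iff_support_of_nonneg hD0 ((hpi.sub hqi).sub hlog)).2
      (hne.trans_le (measure_mono hsupp))
  have hint : ∫ x, D x ∂μ =
      ∫ x, p x ∂μ - ∫ x, q x ∂μ - ∫ x, q x * Real.log (p x / q x) ∂μ := by
    rw [integral_sub (f := fun x => p x - q x) (hpi.sub hqi) hlog, integral_sub hpi hqi]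
  linarith

theorem IsPosDensity.integrable {d : ℝ → ℝ} (hd : IsPosDensity d) : Integrable d :=
  Integrable.of_integral_ne_zero (by rw [hd.int_one]; exact one_ne_zero)

section Densities

variable {L : ℕ} {f g : Fin L → ℝ → ℝ}

theorem isPosDensity_update (hg : ∀ ℓ, IsPosDensity (g ℓ)) {d : ℝ → ℝ} (hd : IsPosDensity d)
    (i r : Fin L) : IsPosDensity (Function.update g i d r) := by
  rcases eq_or_ne r i with rfl | h
  · simpa using hd
  · simpa [h] using hg r

theorem gdens_pos (hg : ∀ ℓ, IsPosDensity (g ℓ)) (x : Obs L) : 0 < gdens g x :=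
  Finset.prod_pos fun ℓ _ => (hg ℓ).pos _

theorem measurable_gdens (hg : ∀ ℓ, IsPosDensity (g ℓ)) : Measurable (gdens g) :=
  Finset.measurable_prod _ fun ℓ _ => (hg ℓ).meas.comp (measurable_pi_apply ℓ)

theorem integrable_gdens (hg : ∀ ℓ, IsPosDensity (g ℓ)) : Integrable (gdens g) :=
  Integrable.fintype_prod fun ℓ => (hg ℓ).integrable

theorem integral_gdens (hg : ∀ ℓ, IsPosDensity (g ℓ)) : ∫ x, gdens g x = 1 := by
  simp [gdens, integral_fintype_prod_volume_eq_prod, (hg _).int_one]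

theorem pdens1_eq_gdens_update (f g : Fin L → ℝ → ℝ) (ℓ : Fin L) :
    pdens1 f g ℓ = gdens (Function.update g ℓ (f ℓ)) := by
  ext x
  refine Finset.prod_congr rfl fun r _ => ?_
  rcases eq_or_ne r ℓ with rfl | h <;> simp [*]

theorem gdens_update_mul (g : Fin L → ℝ → ℝ) (i : Fin L) (d : ℝ → ℝ) (x : Obs L) :
    gdens (Function.update g i d) x * g i (x i) = d (x i) * gdens g x := by
  have hcompl : ∏ r ∈ {i}ᶜ, Function.update g i d r (x r) = ∏ r ∈ {i}ᶜ, g r (x r) :=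
    Finset.prod_congr rfl fun r hr => by
      rw [Function.update_of_ne (by simpa using hr)]
  rw [gdens, gdens, Fintype.prod_eq_mul_prod_compl i, Fintype.prod_eq_mul_prod_compl i,
    Function.update_self, hcompl]
  ring

theorem pdens1_div_gdens (hg : ∀ ℓ, IsPosDensity (g ℓ)) (ℓ : Fin L) (x : Obs L) :
    pdens1 f g ℓ x / gdens g x = f ℓ (x ℓ) / g ℓ (x ℓ) := by
  rw [div_eq_div_iff (gdens_pos hg x).ne' ((hg ℓ).pos _).ne', pdens1_eq_gdens_update,
    gdens_update_mul]

theorem pbar1_div_gdens (hg : ∀ ℓ, IsPosDensity (g ℓ)) (α : Fin L → ℝ) (x : Obs L) :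
    pbar1 f g α x / gdens g x = ∑ ℓ, α ℓ * (f ℓ (x ℓ) / g ℓ (x ℓ)) := by
  simp only [pbar1, Finset.sum_div, mul_div_assoc, pdens1_div_gdens hg]

theorem pbar1_div_gdens_update (hg : ∀ ℓ, IsPosDensity (g ℓ)) {α : Fin L → ℝ} {i : Fin L}
    (hi : α i = 0) (x : Obs L) (t : ℝ) :
    pbar1 f g α (Function.update x i t) / gdens g (Function.update x i t) =
      pbar1 f g α x / gdens g x := by
  simp only [pbar1_div_gdens hg]
  refine Finset.sum_congr rfl fun ℓ _ => ?_
  rcases eq_or_ne ℓ i with rfl | h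
  · simp [hi]
  · rw [Function.update_of_ne h]

theorem pbar1_pos (hf : ∀ ℓ, IsPosDensity (f ℓ)) (hg : ∀ ℓ, IsPosDensity (g ℓ))
    {α : Fin L → ℝ} (hα : ∀ r, 0 ≤ α r) {j : Fin L} (hj : 0 < α j) (x : Obs L) :
    0 < pbar1 f g α x := by
  have hp : ∀ ℓ, 0 < pdens1 f g ℓ x := fun ℓ => by
    rw [pdens1_eq_gdens_update]
    exact gdens_pos (isPosDensity_update hg (hf ℓ) ℓ) x
  exact Finset.sum_pos' (fun ℓ _ => mul_nonneg (hα ℓ) (hp ℓ).le)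
    ⟨j, Finset.mem_univ j, mul_pos hj (hp j)⟩

theorem measurable_pbar1 (hf : ∀ ℓ, IsPosDensity (f ℓ)) (hg : ∀ ℓ, IsPosDensity (g ℓ))
    (α : Fin L → ℝ) : Measurable (pbar1 f g α) := by
  unfold pbar1
  simp only [pdens1_eq_gdens_update]
  exact Finset.measurable_sum _ fun ℓ _ =>
    (measurable_gdens (isPosDensity_update hg (hf ℓ) ℓ)).const_mul _

theorem integrable_pbar1 (hf : ∀ ℓ, IsPosDensity (f ℓ)) (hg : ∀ ℓ, IsPosDensity (g ℓ))
    (α : Fin L → ℝ) : Integrable (pbar1 f g α) := by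
  unfold pbar1
  simp only [pdens1_eq_gdens_update]
  exact integrable_finsetSum _ fun ℓ _ =>
    (integrable_gdens (isPosDensity_update hg (hf ℓ) ℓ)).const_mul _

theorem integral_pbar1 (hf : ∀ ℓ, IsPosDensity (f ℓ)) (hg : ∀ ℓ, IsPosDensity (g ℓ))
    (α : Fin L → ℝ) : ∫ x, pbar1 f g α x = ∑ ℓ, α ℓ := by
  simp only [pbar1, pdens1_eq_gdens_update]
  rw [integral_finsetSum _ fun ℓ _ =>
    (integrable_gdens (isPosDensity_update hg (hf ℓ) ℓ)).const_mul _]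
  simp [integral_const_mul, integral_gdens (isPosDensity_update hg (hf _) _)]

end Densities

theorem integral_gdens_update_mul_eq {n : ℕ} (g : Fin (n + 1) → ℝ → ℝ) (i : Fin (n + 1))
    {d : ℝ → ℝ} (hd : ∫ t, d t = ∫ t, g i t) {H : Obs (n + 1) → ℝ}
    (hH : ∀ x t, H (Function.update x i t) = H x) :
    ∫ x, gdens (Function.update g i d) x * H x = ∫ x, gdens g x * H x := by
  have key : ∀ d' : ℝ → ℝ, ∫ x, gdens (Function.update g i d') x * H x =
      (∫ t, d' t) * ∫ y, (∏ k, g (i.succAbove k) (y k)) * H (i.insertNth 0 y) := by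
    intro d'
    rw [← integral_mul_comp_removeNth i]
    refine integral_congr_ae (Eventually.of_forall fun x => ?_)
    dsimp only
    rw [Fin.insertNth_removeNth, hH]
    simp only [gdens, Fin.prod_univ_succAbove _ i, Function.update_self,
      Function.update_of_ne (Fin.succAbove_ne i _), Fin.removeNth_apply]
    ring
  rw [key, hd, ← key, Function.update_eq_self]

theorem volume_pbar1_ne_gdens_pos {n : ℕ} {f g : Fin (n + 1) → ℝ → ℝ}
    (hf : ∀ ℓ, IsPosDensity (f ℓ)) (hg : ∀ ℓ, IsPosDensity (g ℓ)) {j : Fin (n + 1)}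
    (hfg : 0 < volume {t | f j t ≠ g j t}) {α : Fin (n + 1) → ℝ} (hj : 0 < α j) :
    0 < volume {x | pbar1 f g α x ≠ gdens g x} := by
  refine pos_iff_ne_zero.2 fun h0 => hfg.ne' (ae_iff.1 ?_)
  set c : (Fin n → ℝ) → ℝ :=
    fun y => ∑ k, α (j.succAbove k) * (f (j.succAbove k) (y k) / g (j.succAbove k) (y k))
  have hsplit : ∀ᵐ x : Obs (n + 1), α j * (f j (x j) / g j (x j)) = 1 - c (j.removeNth x) := by
    filter_upwards [ae_iff.2 h0] with x hx
    have hlr := pbar1_div_gdens (f := f) hg α x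
    rw [hx, div_self (gdens_pos hg x).ne', Fin.sum_univ_succAbove _ j] at hlr
    simp only [c, Fin.removeNth_apply]
    linarith
  obtain ⟨a, ha⟩ := exists_ae_eq_const_of_ae_eq_comp_removeNth j
    (φ := fun t => α j * (f j t / g j t)) (ψ := fun y => 1 - c y) hsplit
  refine ae_eq_of_ae_eq_const_mul (a := a / α j) (by rw [(hf j).int_one, (hg j).int_one])
    (by rw [(hg j).int_one]; exact one_ne_zero) ?_
  filter_upwards [ha] with t ht
  rw [← ht]
  field_simp [((hg j).pos t).ne']

theorem stmt18_general {L : ℕ}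
    (f g : Fin L → ℝ → ℝ)
    (hf : ∀ ℓ, IsPosDensity (f ℓ)) (hg : ∀ ℓ, IsPosDensity (g ℓ))
    (hfg : ∀ ℓ, 0 < volume {t | f ℓ t ≠ g ℓ t})
    (α : Fin L → ℝ) (hαnn : ∀ r, 0 ≤ α r) (hαsum : ∑ r, α r = 1)
    (hsupp : ∃ j, 0 < α j)
    (i : Fin L) (hi : α i = 0)
    (habsg : ∫⁻ x : Obs L, ENNReal.ofReal
        (gdens g x * |Real.log (pbar1 f g α x / gdens g x)|) ∂volume < ⊤) :
    (∫ x : Obs L, pdens1 f g i x * Real.log (pbar1 f g α x / gdens g x)) =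
        ∫ x : Obs L, gdens g x * Real.log (pbar1 f g α x / gdens g x) ∧
      (∫ x : Obs L, gdens g x * Real.log (pbar1 f g α x / gdens g x)) < 0 := by
  obtain ⟨j, hj⟩ := hsupp
  obtain ⟨n, rfl⟩ := Nat.exists_eq_add_one_of_ne_zero i.pos.ne'
  have hlog : Integrable fun x => gdens g x * Real.log (pbar1 f g α x / gdens g x) := by
    refine ⟨((measurable_gdens hg).mul ((measurable_pbar1 hf hg α).div
      (measurable_gdens hg)).log).aestronglyMeasurable, (hasFiniteIntegral_iff_norm _).2 ?_⟩
    simpa only [norm_mul, Real.norm_eq_abs, abs_of_pos (gdens_pos hg _)] using habsg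
  constructor
  · rw [pdens1_eq_gdens_update]
    exact integral_gdens_update_mul_eq g i (by rw [(hf i).int_one, (hg i).int_one])
      fun x t => by rw [pbar1_div_gdens_update hg hi]
  · exact integral_mul_log_div_lt_zero (pbar1_pos hf hg hαnn hj) (gdens_pos hg)
      (integrable_pbar1 hf hg α) (integrable_gdens hg)
      (by rw [integral_pbar1 hf hg, hαsum, integral_gdens hg]) hlog
      (volume_pbar1_ne_gdens_pos hf hg (hfg j) hj)

/-- Negative drift off the support in the single-anomaly case.  For
`m = 1`, if `α` has nonempty support `S`, `i ∉ S`, and the stated integrability holds, then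
`∫ p_i log(p̄_α/g) = ∫ g log(p̄_α/g) < 0`. -/
theorem stmt18 {L : ℕ} (hL : 1 ≤ L)
    (f g : Fin L → ℝ → ℝ)
    (hf : ∀ ℓ, IsPosDensity (f ℓ)) (hg : ∀ ℓ, IsPosDensity (g ℓ))
    (hfg : ∀ ℓ, 0 < volume {t | f ℓ t ≠ g ℓ t})
    (α : Fin L → ℝ) (hαnn : ∀ r, 0 ≤ α r) (hαsum : ∑ r, α r = 1)
    (hsupp : ∃ j, 0 < α j)
    (i : Fin L) (hi : α i = 0)
    (habs : ∀ ℓ : Fin L,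
      ∫⁻ x : Obs L, ENNReal.ofReal
        (pdens1 f g ℓ x * |Real.log (pbar1 f g α x / gdens g x)|) ∂volume < ⊤)
    (habsg : ∫⁻ x : Obs L, ENNReal.ofReal
        (gdens g x * |Real.log (pbar1 f g α x / gdens g x)|) ∂volume < ⊤) :
    (∫ x : Obs L, pdens1 f g i x * Real.log (pbar1 f g α x / gdens g x)) =
        ∫ x : Obs L, gdens g x * Real.log (pbar1 f g α x / gdens g x) ∧
      (∫ x : Obs L, gdens g x * Real.log (pbar1 f g α x / gdens g x)) < 0 :=
  stmt18_general f g hf hg hfg α hαnn hαsum hsupp i hi habsg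

end MovingAnomaly
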